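/- The 2-D Hartley transform reconstruction identity: if B = (T + T^(c) + T^(r) − T^(cr))/2 where T = H·A·H for the exact normalized Hartley matrix H of order n, and T^(c), T^(r), T^(cr) are obtained from T by the index maps (i,j) ↦ (i, n−j mod n), (i,j) ↦ (n−i mod n, j), (i,j) ↦ (n−i mod n, n−j mod n) respectively, then applying the same operation to B recovers A. -/

import Mathlib

/-!
Let `J` be the permutation matrix of `i ↦ -i` on `Fin n`. The three flips of `T` are `T J`, `J T`
and `J T J`, so the 2-D transform is `A ↦ φ (H A H)` with `φ X = (X + X J + J X - J X J) / 2`.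
Since `J² = 1`, `φ` is an involution. Since `H² = 1` (orthogonality of the `cas` basis) and `H`
commutes with `J` (the entry `H i k` depends only on `i * k` in `Fin n`), conjugation by `H`
commutes with `φ` and undoes itself, so applying the transform twice gives `φ (φ A) = A`.
-/

noncomputable def cas (x : ℝ) : ℝ := Real.cos x + Real.sin x

noncomputable def hartleyMatrix (n : ℕ) : Matrix (Fin n) (Fin n) ℝ :=
  Matrix.of fun i k =>
    (1 / Real.sqrt n) * cas (2 * Real.pi * ((i : ℕ) : ℝ) * ((k : ℕ) : ℝ) / (n : ℝ))

/-- Column flip: `(i, j) ↦ (i, -j)` (i.e. `(i, (n - j) mod n)`). -/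
def flipC {n : ℕ} [NeZero n] (T : Matrix (Fin n) (Fin n) ℝ) : Matrix (Fin n) (Fin n) ℝ :=
  Matrix.of fun i j => T i (-j)

/-- Row flip: `(i, j) ↦ (-i, j)`. -/
def flipR {n : ℕ} [NeZero n] (T : Matrix (Fin n) (Fin n) ℝ) : Matrix (Fin n) (Fin n) ℝ :=
  Matrix.of fun i j => T (-i) j

/-- Both flips: `(i, j) ↦ (-i, -j)`. -/
def flipCR {n : ℕ} [NeZero n] (T : Matrix (Fin n) (Fin n) ℝ) : Matrix (Fin n) (Fin n) ℝ :=
  Matrix.of fun i j => T (-i) (-j)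

/-- The 2-D Hartley transform via the flip-combination formula. -/
noncomputable def hartley2D {n : ℕ} [NeZero n] (A : Matrix (Fin n) (Fin n) ℝ) :
    Matrix (Fin n) (Fin n) ℝ :=
  (1 / 2 : ℝ) •
    (hartleyMatrix n * A * hartleyMatrix n + flipC (hartleyMatrix n * A * hartleyMatrix n) +
      flipR (hartleyMatrix n * A * hartleyMatrix n) -
      flipCR (hartleyMatrix n * A * hartleyMatrix n))

section FlipCombine

variable {R : Type*} [Ring R] [Algebra ℝ R]

noncomputable def flipCombine (J X : R) : R := (1 / 2 : ℝ) • (X + X * J + J * X - J * X * J)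

theorem flipCombine_flipCombine {J : R} (hJ : J * J = 1) (X : R) :
    flipCombine J (flipCombine J X) = X := by
  have hJX : ∀ Y : R, J * (J * Y) = Y := fun Y => by rw [← mul_assoc, hJ, one_mul]
  simp only [flipCombine, smul_mul_assoc, mul_smul_comm, ← smul_add, ← smul_sub, smul_smul,
    mul_add, add_mul, mul_sub, sub_mul, mul_assoc, hJ, hJX, mul_one]
  module

theorem mul_flipCombine_mul {H J : R} (hHJ : Commute H J) (X : R) :
    H * flipCombine J X * H = flipCombine J (H * X * H) := by
  simp only [flipCombine, smul_mul_assoc, mul_smul_comm, mul_add, add_mul, mul_sub, sub_mul,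
    mul_assoc, hHJ.left_comm]
  simp only [← mul_assoc, hHJ.eq]

end FlipCombine

section Reflection

variable {n : ℕ} [NeZero n]

abbrev negPermMatrix (n : ℕ) [NeZero n] : Matrix (Fin n) (Fin n) ℝ :=
  (Equiv.neg (Fin n)).permMatrix ℝ

theorem flipC_eq_mul_negPermMatrix (T : Matrix (Fin n) (Fin n) ℝ) :
    flipC T = T * negPermMatrix n := by
  rw [PEquiv.mul_toMatrix_toPEquiv]; rfl

theorem flipR_eq_negPermMatrix_mul (T : Matrix (Fin n) (Fin n) ℝ) :
    flipR T = negPermMatrix n * T := by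
  rw [PEquiv.toMatrix_toPEquiv_mul]; rfl

theorem flipCR_eq_negPermMatrix_mul_mul (T : Matrix (Fin n) (Fin n) ℝ) :
    flipCR T = negPermMatrix n * T * negPermMatrix n := by
  rw [← flipC_eq_mul_negPermMatrix, ← flipR_eq_negPermMatrix_mul]; rfl

theorem negPermMatrix_mul_self : negPermMatrix n * negPermMatrix n = 1 := by
  rw [← Matrix.permMatrix_mul]
  convert Matrix.permMatrix_one
  ext; simp

theorem hartley2D_eq_flipCombine (A : Matrix (Fin n) (Fin n) ℝ) :
    hartley2D A = flipCombine (negPermMatrix n) (hartleyMatrix n * A * hartleyMatrix n) := by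
  rw [hartley2D, flipC_eq_mul_negPermMatrix, flipR_eq_negPermMatrix_mul,
    flipCR_eq_negPermMatrix_mul_mul, flipCombine]

end Reflection

section HartleyMatrix

open Real

theorem cas_mul_cas (a b : ℝ) : cas a * cas b = cos (a - b) + sin (a + b) := by
  simp only [cas, cos_sub, sin_add]
  ring

theorem cas_periodic : Function.Periodic cas (2 * π) := fun x => by
  simp [cas]

theorem Fin.intCast_dvd_sub_iff {n : ℕ} (i j : Fin n) : (n : ℤ) ∣ (i : ℤ) - j ↔ i = j := by
  refine ⟨fun h => ?_, fun h => by simp [h]⟩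
  have hlt : |(i : ℤ) - j| < n := by
    rw [abs_sub_lt_iff]; omega
  exact Fin.ext (by exact_mod_cast sub_eq_zero.mp (Int.eq_zero_of_abs_lt_dvd h hlt))

variable {n : ℕ} [NeZero n]

theorem sum_exp_two_pi_mul_I (m : ℤ) :
    ∑ k : Fin n, Complex.exp ((2 * π * m * k / n : ℝ) * Complex.I) =
      if (n : ℤ) ∣ m then (n : ℂ) else 0 := by
  have hζ := Complex.isPrimitiveRoot_exp n (NeZero.ne n)
  set ζ := Complex.exp (2 * π * Complex.I / n)
  have hterm : ∀ k : Fin n,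
      Complex.exp ((2 * π * m * k / n : ℝ) * Complex.I) = (ζ ^ m) ^ (k : ℕ) := by
    intro k
    rw [← zpow_natCast, ← zpow_mul, ← Complex.exp_int_mul]
    push_cast
    ring_nf
  simp only [hterm, Fin.sum_univ_eq_sum_range ((ζ ^ m) ^ ·)]
  split_ifs with hm
  · simp [(hζ.zpow_eq_one_iff_dvd m).mpr hm]
  · have hz : (ζ ^ m) ^ n = 1 := by
      rw [← zpow_natCast, ← zpow_mul, hζ.zpow_eq_one_iff_dvd]
      exact dvd_mul_left _ _
    rw [geom_sum_eq ((hζ.zpow_eq_one_iff_dvd m).not.mpr hm), hz, sub_self, zero_div]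

theorem sum_cos_two_pi_mul (m : ℤ) :
    ∑ k : Fin n, cos (2 * π * m * k / n) = if (n : ℤ) ∣ m then (n : ℝ) else 0 := by
  have h := congrArg Complex.re (sum_exp_two_pi_mul_I (n := n) m)
  simp only [Complex.re_sum, Complex.exp_ofReal_mul_I_re] at h
  rw [h]
  split_ifs <;> simp

theorem sum_sin_two_pi_mul (m : ℤ) : ∑ k : Fin n, sin (2 * π * m * k / n) = 0 := by
  have h := congrArg Complex.im (sum_exp_two_pi_mul_I (n := n) m)
  simp only [Complex.im_sum, Complex.exp_ofReal_mul_I_im] at h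
  rw [h]
  split_ifs <;> simp

theorem hartleyMatrix_mul_self : hartleyMatrix n * hartleyMatrix n = 1 := by
  have hn : (n : ℝ) ≠ 0 := Nat.cast_ne_zero.mpr (NeZero.ne n)
  have hsq : 1 / √n * (1 / √n) = 1 / n := by
    rw [div_mul_div_comm, Real.mul_self_sqrt n.cast_nonneg, one_mul]
  ext i j
  have hentry : ∀ k : Fin n, hartleyMatrix n i k * hartleyMatrix n k j =
      1 / n * (cos (2 * π * ((i - j : ℤ) : ℝ) * k / n) +
        sin (2 * π * ((i + j : ℤ) : ℝ) * k / n)) := by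
    intro k
    simp only [hartleyMatrix, Matrix.of_apply]
    rw [mul_mul_mul_comm, hsq, cas_mul_cas]
    push_cast
    ring_nf
  rw [Matrix.mul_apply, Finset.sum_congr rfl fun k _ => hentry k, ← Finset.mul_sum,
    Finset.sum_add_distrib, sum_cos_two_pi_mul, sum_sin_two_pi_mul]
  simp only [add_zero, Fin.intCast_dvd_sub_iff, Matrix.one_apply]
  split_ifs <;> simp [hn]

theorem hartleyMatrix_apply (i k : Fin n) :
    hartleyMatrix n i k = 1 / √n * cas (2 * π * ((i * k : Fin n) : ℕ) / n) := by
  have hn : (n : ℝ) ≠ 0 := Nat.cast_ne_zero.mpr (NeZero.ne n)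
  have hper : Function.Periodic (fun m : ℕ => cas (2 * π * m / n)) n := fun m => by
    simp only [Nat.cast_add, mul_add, add_div, mul_div_cancel_right₀ _ hn, cas_periodic _]
  rw [Fin.val_mul, hper.map_mod_nat]
  simp only [hartleyMatrix, Matrix.of_apply, Nat.cast_mul, mul_assoc]

theorem hartleyMatrix_apply_neg_right (i j : Fin n) :
    hartleyMatrix n i (-j) = hartleyMatrix n (-i) j := by
  rw [hartleyMatrix_apply, hartleyMatrix_apply, mul_neg, neg_mul]

theorem commute_hartleyMatrix_negPermMatrix :
    Commute (hartleyMatrix n) (negPermMatrix n) := by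
  rw [Commute, SemiconjBy, ← flipC_eq_mul_negPermMatrix, ← flipR_eq_negPermMatrix_mul]
  ext i j
  exact hartleyMatrix_apply_neg_right i j

end HartleyMatrix

theorem hartley2D_involutive {n : ℕ} [NeZero n] (A : Matrix (Fin n) (Fin n) ℝ) :
    hartley2D (hartley2D A) = A := by
  have hHH : hartleyMatrix n * hartleyMatrix n = 1 := hartleyMatrix_mul_self
  have hHAH : hartleyMatrix n * (hartleyMatrix n * A * hartleyMatrix n) * hartleyMatrix n = A := by
    rw [← mul_assoc, ← mul_assoc, hHH, one_mul, mul_assoc, hHH, mul_one]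
  rw [hartley2D_eq_flipCombine, hartley2D_eq_flipCombine,
    mul_flipCombine_mul commute_hartleyMatrix_negPermMatrix, hHAH,
    flipCombine_flipCombine negPermMatrix_mul_self]
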